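/- arXiv:1610.09361 — 3 statements merged into one kernel-verified Lean document; each statement's English description precedes it below -/
import Mathlib

section
/- For even N > 1, the sequence a(m) = T(N,0,m) satisfies the recurrence Σ_{j=0}^{N-1} (-1)^j C(N,j) a(n−j) = 0 for all n ≥ N. -/
open Finset

private def Taux (N r m : ℕ) : ℤ :=
  ∑ k ∈ Finset.range (m + 1), if k % N = r then (Nat.choose m k : ℤ) else 0

private lemma mod_shift (N r k : ℕ) (hr : r < N) :
    (k + 1) % N = r ↔ k % N = (r + (N - 1)) % N := by
  have hrr : r % N = r := Nat.mod_eq_of_lt hr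
  constructor
  · intro h
    have h1 : (k + 1) ≡ r [MOD N] := by unfold Nat.ModEq; rw [h, hrr]
    have h2 : (k + 1) + (N - 1) ≡ r + (N - 1) [MOD N] := h1.add_right _
    have h4 : k + N ≡ r + (N - 1) [MOD N] := by
      rw [show k + N = (k + 1) + (N - 1) by omega]; exact h2
    have h3 : k ≡ k + N [MOD N] := (Nat.add_mod_right k N).symm
    exact h3.trans h4
  · intro h
    have h1 : k ≡ r + (N - 1) [MOD N] := h
    have h2 : k + 1 ≡ r + (N - 1) + 1 [MOD N] := h1.add_right 1
    rw [show r + (N - 1) + 1 = r + N by omega] at h2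
    have h5 : (k + 1) % N = (r + N) % N := h2
    rw [Nat.add_mod_right] at h5
    rwa [hrr] at h5

private lemma Taux_step (N r m : ℕ) (hN : 1 < N) (hr : r < N) :
    Taux N r (m + 1) = Taux N r m + Taux N ((r + (N - 1)) % N) m := by
  unfold Taux
  rw [Finset.sum_range_succ' (fun k => if k % N = r then (Nat.choose (m+1) k : ℤ) else 0)]
  have hsplit : ∀ k ∈ Finset.range (m + 1),
      (if (k + 1) % N = r then (Nat.choose (m+1) (k+1) : ℤ) else 0)
      = (if (k + 1) % N = r then (Nat.choose m (k+1) : ℤ) else 0)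
        + (if k % N = (r + (N - 1)) % N then (Nat.choose m k : ℤ) else 0) := by
    intro k _
    simp only [mod_shift N r k hr, Nat.choose_succ_succ m k]
    push_cast
    split <;> ring
  rw [Finset.sum_congr rfl hsplit, Finset.sum_add_distrib]
  have h0 : (if 0 % N = r then (Nat.choose (m+1) 0 : ℤ) else 0)
      = (if 0 % N = r then (Nat.choose m 0 : ℤ) else 0) := by simp
  rw [h0]
  have hmain : (∑ k ∈ Finset.range (m + 1),
        if (k + 1) % N = r then (Nat.choose m (k+1) : ℤ) else 0)
      + (if 0 % N = r then (Nat.choose m 0 : ℤ) else 0)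
      = ∑ k ∈ Finset.range (m + 1), if k % N = r then (Nat.choose m k : ℤ) else 0 := by
    rw [← Finset.sum_range_succ' (fun k => if k % N = r then (Nat.choose m k : ℤ) else 0) (m+1),
      Finset.sum_range_succ]
    simp [Nat.choose_succ_self]
  linarith [hmain]

private lemma S_formula (N : ℕ) (hN : 1 < N) (i : ℕ) : ∀ r m : ℕ, r < N →
    ∑ j ∈ Finset.range (i + 1), (-1 : ℤ) ^ j * (Nat.choose i j : ℤ) * Taux N r (m + j)
      = (-1 : ℤ) ^ i * Taux N ((r + i * (N - 1)) % N) m := by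
  induction i with
  | zero =>
    intro r m hr
    simp [Nat.mod_eq_of_lt hr]
  | succ i ih =>
    intro r m hr
    have hpeel : ∀ m' : ℕ, Taux N r m'
        - ∑ j ∈ Finset.range (i + 1),
            (-1 : ℤ) ^ j * (Nat.choose i (j+1) : ℤ) * Taux N r (m' + (j + 1))
        = (-1 : ℤ) ^ i * Taux N ((r + i * (N - 1)) % N) m' := by
      intro m'
      have e1 := ih r m' hr
      rw [Finset.sum_range_succ'
        (fun j => (-1 : ℤ) ^ j * (Nat.choose i j : ℤ) * Taux N r (m' + j))] at e1
      have e2 : ∑ j ∈ Finset.range i,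
          (-1 : ℤ) ^ (j+1) * (Nat.choose i (j+1) : ℤ) * Taux N r (m' + (j + 1))
          = - ∑ j ∈ Finset.range i,
              (-1 : ℤ) ^ j * (Nat.choose i (j+1) : ℤ) * Taux N r (m' + (j + 1)) := by
        rw [← Finset.sum_neg_distrib]
        exact Finset.sum_congr rfl (fun j _ => by ring)
      rw [e2] at e1
      rw [Finset.sum_range_succ]
      simp only [Nat.choose_succ_self, Nat.cast_zero, mul_zero, zero_mul, add_zero]
      simp only [pow_zero, Nat.choose_zero_right, Nat.cast_one, one_mul, add_zero, mul_zero] at e1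
      linarith [e1]
    rw [Finset.sum_range_succ'
      (fun j => (-1 : ℤ) ^ j * (Nat.choose (i+1) j : ℤ) * Taux N r (m + j))]
    have hsplit : ∀ j ∈ Finset.range (i + 1),
        (-1 : ℤ) ^ (j+1) * (Nat.choose (i+1) (j+1) : ℤ) * Taux N r (m + (j + 1))
        = -((-1 : ℤ) ^ j * (Nat.choose i j : ℤ) * Taux N r ((m+1) + j))
          - (-1 : ℤ) ^ j * (Nat.choose i (j+1) : ℤ) * Taux N r (m + (j + 1)) := by
      intro j _
      rw [Nat.choose_succ_succ i j]
      push_cast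
      rw [show m + (j + 1) = (m + 1) + j by omega]
      ring
    rw [Finset.sum_congr rfl hsplit, Finset.sum_sub_distrib, Finset.sum_neg_distrib]
    have hρ : (r + i * (N - 1)) % N < N := Nat.mod_lt _ (by omega)
    have hmod : ((r + i * (N - 1)) % N + (N - 1)) % N = (r + (i+1) * (N - 1)) % N := by
      rw [Nat.add_mod, Nat.mod_mod_of_dvd _ (dvd_refl N), ← Nat.add_mod]
      ring_nf
    have key := Taux_step N ((r + i * (N - 1)) % N) m hN hρ
    rw [hmod] at key
    have hih1 := ih r (m + 1) hr
    have hpm := hpeel m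
    simp only [pow_zero, Nat.choose_zero_right, Nat.cast_one, one_mul, add_zero, mul_zero]
    linear_combination -hih1 + hpm - (-1 : ℤ)^i * key

/-- For even `N > 1`, `a(m) = T(N,0,m)` satisfies
`Σ_{j=0}^{N-1} (-1)^j C(N,j) a(n−j) = 0` for all `n ≥ N`. -/
theorem T_recurrence_even (N : ℕ) (hN : 1 < N) (hNeven : Even N)
    (a : ℕ → ℤ)
    (ha : ∀ m, a m = ∑ j ∈ Finset.range (m + 1),
      if N ∣ j then (Nat.choose m j : ℤ) else 0)
    (n : ℕ) (hn : N ≤ n) :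
    ∑ j ∈ Finset.range N, (-1 : ℤ) ^ j * (Nat.choose N j : ℤ) * a (n - j) = 0 := by
  have haT : ∀ m, a m = Taux N 0 m := by
    intro m
    rw [ha m]
    unfold Taux
    refine Finset.sum_congr rfl fun j _ => ?_
    simp [Nat.dvd_iff_mod_eq_zero]
  have hS := S_formula N hN N 0 (n - N) (by omega)
  rw [show (0 + N * (N - 1)) % N = 0 by simp [Nat.mul_mod_right],
    Even.neg_one_pow hNeven, one_mul] at hS
  have hrefl : ∑ j ∈ Finset.range (N + 1), (-1 : ℤ) ^ j * (Nat.choose N j : ℤ) * Taux N 0 (n - j)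
      = ∑ j ∈ Finset.range (N + 1), (-1 : ℤ) ^ j * (Nat.choose N j : ℤ) * Taux N 0 (n - N + j) := by
    rw [← Finset.sum_range_reflect]
    refine Finset.sum_congr rfl fun j hj => ?_
    simp only [Finset.mem_range] at hj
    have hjN : j ≤ N := by omega
    have hsign : (-1 : ℤ) ^ (N + 1 - 1 - j) = (-1) ^ j := by
      rw [show N + 1 - 1 - j = N - j by omega]
      have h1 : (-1 : ℤ) ^ (N - j) * (-1) ^ j = 1 := by
        rw [← pow_add, show N - j + j = N by omega]; exact Even.neg_one_pow hNeven
      have h2 : (-1 : ℤ) ^ j * (-1) ^ j = 1 := by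
        rw [← pow_add]; exact Even.neg_one_pow ⟨j, rfl⟩
      linear_combination ((-1 : ℤ) ^ j) * h1 - ((-1 : ℤ) ^ (N - j)) * h2
    rw [hsign, show N + 1 - 1 - j = N - j by omega, Nat.choose_symm hjN,
      show n - (N - j) = n - N + j by omega]
  rw [hS] at hrefl
  rw [Finset.sum_range_succ] at hrefl
  simp only [Nat.choose_self, Nat.cast_one, mul_one, Even.neg_one_pow hNeven, one_mul] at hrefl
  simp only [haT]
  linarith [hrefl]
end

section
/- Let p be an odd prime and N even with p > N. Then N·(1 − T(N,0,p))/p ≡ Σ_{j=1}^{⌊p/N⌋} 1/j (mod p), i.e., N(1 − T(N,0,p)) ≡ p·H_{⌊p/N⌋} (mod p²) where H denotes the harmonic number interpreted modulo p. -/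
/-!
For `0 < j < p` we have `j * C(p, j) = p * C(p - 1, j - 1)` and `C(p - 1, j - 1) ≡ (-1) ^ (j - 1)`
modulo `p`, so `C(p, j) / p ≡ (-1) ^ (j - 1) / j`. Since `N ∤ p`, the multiples of `N` in `[0, p]`
are `0` and `N * k` with `1 ≤ k ≤ ⌊p / N⌋`, whence `1 - T = -∑ₖ C(p, N * k)`; as `N * k` is even,
`N * C(p, N * k) / p ≡ -1 / k`.
-/

open Finset

theorem Finset.sum_range_succ_filter_dvd {M : Type*} [AddCommMonoid M] {N : ℕ} (hN : 0 < N)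
    (n : ℕ) (f : ℕ → M) :
    ∑ j ∈ range (n + 1) with N ∣ j, f j = ∑ k ∈ range (n / N + 1), f (N * k) := by
  have hmultiples : {j ∈ range (n + 1) | N ∣ j} = (range (n / N + 1)).image (N * ·) := by
    ext j
    simp only [mem_filter, mem_range, mem_image, Nat.lt_succ_iff, Nat.le_div_iff_mul_le hN]
    constructor
    · rintro ⟨hj, k, rfl⟩
      exact ⟨k, by linarith, rfl⟩
    · rintro ⟨k, hk, rfl⟩
      exact ⟨by linarith, dvd_mul_right N k⟩
  rw [hmultiples, sum_image fun a _ b _ hab => Nat.eq_of_mul_eq_mul_left hN hab]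

namespace Nat.Prime

theorem natCast_choose_pred_eq_neg_one_pow {p k : ℕ} (hp : p.Prime) (hk : k < p) :
    ((p - 1).choose k : ZMod p) = (-1) ^ k := by
  induction k with
  | zero => simp
  | succ k ih =>
    have hpascal : p.choose (k + 1) = (p - 1).choose k + (p - 1).choose (k + 1) := by
      rw [← Nat.choose_succ_succ', Nat.sub_add_cancel hp.one_le]
    have hzero : (p.choose (k + 1) : ZMod p) = 0 :=
      (ZMod.natCast_eq_zero_iff _ _).mpr (hp.dvd_choose_self k.succ_ne_zero hk)
    rw [hpascal, Nat.cast_add, ih (by omega)] at hzero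
    rw [pow_succ]
    linear_combination hzero

theorem natCast_choose_div_mul_eq_neg_one_pow {p j : ℕ} (hp : p.Prime) (hj0 : 0 < j)
    (hjp : j < p) :
    ((p.choose j / p : ℕ) : ZMod p) * j = (-1) ^ (j - 1) := by
  have habsorb : p * (p - 1).choose (j - 1) = p.choose j * j := by
    simpa only [Nat.sub_add_cancel hp.one_le, Nat.sub_add_cancel hj0] using
      Nat.add_one_mul_choose_eq (p - 1) (j - 1)
  have hquot : (p - 1).choose (j - 1) = p.choose j / p * j := by
    apply Nat.eq_of_mul_eq_mul_left hp.pos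
    rw [habsorb, ← mul_assoc, Nat.mul_div_cancel' (hp.dvd_choose_self hj0.ne' hjp)]
  rw [← natCast_choose_pred_eq_neg_one_pow hp (by omega : j - 1 < p), hquot, Nat.cast_mul]

theorem natCast_mul_choose_mul_div_eq_neg_inv {p N k : ℕ} (hp : p.Prime) (hN : Even N)
    (hNk0 : 0 < N * k) (hNk : N * k < p) :
    N * ((p.choose (N * k) / p : ℕ) : ZMod p) = -(k : ZMod p)⁻¹ := by
  have hodd : Odd (N * k - 1) := Nat.Even.sub_odd hNk0 (hN.mul_right k) odd_one
  have := Fact.mk hp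
  have h := natCast_choose_div_mul_eq_neg_one_pow hp hNk0 hNk
  rw [hodd.neg_one_pow, Nat.cast_mul] at h
  rw [← neg_eq_iff_eq_neg]
  exact eq_inv_of_mul_eq_one_left (by linear_combination -h)

theorem mul_mem_Ioo_of_mem_Icc_div {p N k : ℕ} (hp : p.Prime) (hN : 1 < N) (hNp : N < p)
    (hk : k ∈ Icc 1 (p / N)) : N * k ∈ Set.Ioo 0 p := by
  rw [mem_Icc] at hk
  have hle : N * k ≤ p := mul_comm N k ▸ Nat.mul_le_of_le_div N k p hk.2
  have hne : N * k ≠ p := fun h => by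
    rcases hp.eq_one_or_self_of_dvd N ⟨k, h.symm⟩ with h1 | h1 <;> omega
  exact ⟨Nat.mul_pos (by omega) hk.1, lt_of_le_of_ne hle hne⟩

theorem sum_filter_dvd_choose_eq_one_add_mul {p N : ℕ} (hp : p.Prime) (hN : 1 < N)
    (hNp : N < p) :
    ∑ j ∈ range (p + 1) with N ∣ j, (p.choose j : ℤ) =
      1 + p * ∑ k ∈ Icc 1 (p / N), ((p.choose (N * k) / p : ℕ) : ℤ) := by
  rw [sum_range_succ_filter_dvd (by omega), range_eq_Ico, sum_eq_sum_Ico_succ_bot (Nat.succ_pos _),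
    Nat.succ_eq_add_one, Ico_add_one_right_eq_Icc, mul_sum]
  congr 1
  · simp
  refine sum_congr rfl fun k hk => ?_
  obtain ⟨hNk0, hNkp⟩ := hp.mul_mem_Ioo_of_mem_Icc_div hN hNp hk
  exact_mod_cast (Nat.mul_div_cancel' (hp.dvd_choose_self hNk0.ne' hNkp)).symm

end Nat.Prime

theorem sun_congruence_even_general (N p : ℕ) (hN : 1 < N) (hNeven : Even N)
    (hp : p.Prime) (hpN : N < p)
    (T : ℤ)
    (hT : T = ∑ j ∈ Finset.range (p + 1), if N ∣ j then (Nat.choose p j : ℤ) else 0) :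
    (((N * (1 - T)) / p : ℤ) : ZMod p) =
      ∑ j ∈ Finset.Icc 1 (p / N), ((j : ZMod p))⁻¹ := by
  set S := ∑ k ∈ Icc 1 (p / N), ((p.choose (N * k) / p : ℕ) : ℤ)
  have hquot : N * (1 - T) / p = -(N * S) := by
    rw [hT, ← sum_filter, hp.sum_filter_dvd_choose_eq_one_add_mul hN hpN,
      show (N : ℤ) * (1 - (1 + p * S)) = p * -(N * S) by ring,
      Int.mul_ediv_cancel_left _ (by exact_mod_cast hp.ne_zero)]
  rw [hquot]
  simp only [S, Int.cast_neg, Int.cast_mul, Int.cast_sum, Int.cast_natCast, mul_sum,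
    ← sum_neg_distrib]
  refine sum_congr rfl fun k hk => ?_
  obtain ⟨hNk0, hNkp⟩ := hp.mul_mem_Ioo_of_mem_Icc_div hN hpN hk
  rw [hp.natCast_mul_choose_mul_div_eq_neg_inv hNeven hNk0 hNkp, neg_neg]

/-- Z.-H. Sun's congruence: for an odd prime `p` and even `N` with `1 < N < p`,
`N·(1 − T(N,0,p))/p ≡ Σ_{j=1}^{⌊p/N⌋} 1/j (mod p)`, inverses taken in `ℤ/pℤ`. -/
theorem sun_congruence_even (N p : ℕ) (hN : 1 < N) (hNeven : Even N)
    (hp : p.Prime) (hodd : Odd p) (hpN : N < p)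
    (T : ℤ)
    (hT : T = ∑ j ∈ Finset.range (p + 1), if N ∣ j then (Nat.choose p j : ℤ) else 0) :
    (((N * (1 - T)) / p : ℤ) : ZMod p) =
      ∑ j ∈ Finset.Icc 1 (p / N), ((j : ZMod p))⁻¹ :=
  sun_congruence_even_general N p hN hNeven hp hpN T hT
end

section
/- Let p be an odd prime and 1 ≤ k < p. Then C(p−1, k) ≡ (−1)^k (1 − p·H_k) (mod p²), where H_k = Σ_{j=1}^{k} 1/j with the rational number interpreted p-adically (all denominators are prime to p since k < p). -/
open Finset

lemma lehmer_aux (p : ℕ) (hp : p.Prime) : ∀ k, k < p →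
    ((Nat.choose (p - 1) k : ZMod (p ^ 2))) =
      (-1) ^ k * (1 - (p : ZMod (p ^ 2)) *
        ∑ j ∈ Finset.Icc 1 k, ((j : ZMod (p ^ 2)))⁻¹) := by
  intro k
  induction k with
  | zero => simp
  | succ n ih =>
    intro hkp
    have ihn := ih (by omega)
    have hpp : (p : ZMod (p ^ 2)) * p = 0 := by
      have h := ZMod.natCast_self (p ^ 2)
      push_cast at h
      linear_combination h
    have hcop : Nat.Coprime (n + 1) (p ^ 2) := by
      apply Nat.Coprime.pow_right
      rw [Nat.coprime_comm, hp.coprime_iff_not_dvd]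
      intro hd
      have := Nat.le_of_dvd (by omega) hd
      omega
    have hunit : IsUnit (((n + 1 : ℕ) : ZMod (p ^ 2))) := by
      rw [ZMod.isUnit_iff_coprime]
      exact hcop
    have hu : (((n + 1 : ℕ) : ZMod (p ^ 2))) * (((n + 1 : ℕ) : ZMod (p ^ 2)))⁻¹ = 1 :=
      ZMod.mul_inv_of_unit _ hunit
    have key := Nat.choose_succ_right_eq (p - 1) n
    have keyZ : ((Nat.choose (p - 1) (n + 1) : ZMod (p ^ 2))) * ((n + 1 : ℕ) : ZMod (p ^ 2)) =
        ((Nat.choose (p - 1) n : ZMod (p ^ 2))) * ((p : ZMod (p ^ 2)) - 1 - n) := by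
      have h1 : ((p - 1 - n : ℕ) : ZMod (p ^ 2)) = (p : ZMod (p ^ 2)) - 1 - n := by
        have h2 : (p - 1 - n + (1 + n) : ℕ) = p := by omega
        have h3 := congrArg (Nat.cast : ℕ → ZMod (p ^ 2)) h2
        push_cast at h3
        linear_combination h3
      calc ((Nat.choose (p - 1) (n + 1) : ZMod (p ^ 2))) * ((n + 1 : ℕ) : ZMod (p ^ 2))
          = ((Nat.choose (p - 1) (n + 1) * (n + 1) : ℕ) : ZMod (p ^ 2)) := by push_cast; ring
        _ = ((Nat.choose (p - 1) n * (p - 1 - n) : ℕ) : ZMod (p ^ 2)) := by rw [key]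
        _ = _ := by rw [Nat.cast_mul, h1]
    have hsum : ∑ j ∈ Finset.Icc 1 (n + 1), ((j : ZMod (p ^ 2)))⁻¹ =
        (∑ j ∈ Finset.Icc 1 n, ((j : ZMod (p ^ 2)))⁻¹) + (((n + 1 : ℕ) : ZMod (p ^ 2)))⁻¹ := by
      rw [Finset.sum_Icc_succ_top (by omega : 1 ≤ n + 1)]
    refine hunit.mul_right_cancel ?_
    have hc : ((n + 1 : ℕ) : ZMod (p ^ 2)) = (n : ZMod (p ^ 2)) + 1 := by push_cast; ring
    rw [keyZ, ihn, hsum]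
    rw [hc] at hu ⊢
    linear_combination ((-1 : ZMod (p ^ 2)) ^ n * (-(p : ZMod (p ^ 2)))) * hu +
      ((-1 : ZMod (p ^ 2)) ^ n * (-(∑ j ∈ Finset.Icc 1 n, ((j : ZMod (p ^ 2)))⁻¹))) * hpp

/-- Emma Lehmer's congruence: for an odd prime `p` and `1 ≤ k < p`,
`C(p−1,k) ≡ (−1)^k (1 − p·H_k) (mod p²)`, where `H_k = Σ_{j=1}^{k} 1/j`
with inverses interpreted `p`-adically (here: in `ℤ/p²ℤ`). -/
theorem lehmer_congruence (p k : ℕ) (hp : p.Prime) (hodd : Odd p)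
    (hk : 1 ≤ k) (hkp : k < p) :
    ((Nat.choose (p - 1) k : ZMod (p ^ 2))) =
      (-1) ^ k * (1 - (p : ZMod (p ^ 2)) *
        ∑ j ∈ Finset.Icc 1 k, ((j : ZMod (p ^ 2)))⁻¹) := by
  exact lehmer_aux p hp k hkp
end
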